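/- For 0 < q < p ≤ 1 and natural numbers m, n ≥ 1, the (p,q)-Beta and (p,q)-Gamma functions satisfy B_{p,q}(m,n) = p^{(n-1)(2m+n-2)/2} · Γ_{p,q}(m) Γ_{p,q}(n) / Γ_{p,q}(m+n). -/

import Mathlib

noncomputable section

/-- The (p,q)-number [n]_{p,q} = (p^n - q^n)/(p - q). -/
def pqNum (p q : ℝ) (n : ℕ) : ℝ := (p ^ n - q ^ n) / (p - q)

/-- The (p,q)-factorial [n]_{p,q}!. -/
def pqFactorial (p q : ℝ) (n : ℕ) : ℝ := ∏ k ∈ Finset.range n, pqNum p q (k + 1)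

/-- The (p,q)-binomial coefficient. -/
def pqBinom (p q : ℝ) (n k : ℕ) : ℝ :=
  pqFactorial p q n / (pqFactorial p q (n - k) * pqFactorial p q k)

/-- The (p,q)-power basis (a ⊖ b)^n_{p,q} = ∏_{j=0}^{n-1} (p^j a - q^j b). -/
def pqPow (p q a b : ℝ) (n : ℕ) : ℝ := ∏ j ∈ Finset.range n, (p ^ j * a - q ^ j * b)

/-- The (p,q)-derivative. -/
def pqDeriv (p q : ℝ) (f : ℝ → ℝ) (x : ℝ) : ℝ := (f (p * x) - f (q * x)) / ((p - q) * x)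

/-- The (p,q)-integral of f over [0,1] (case 0 < q < p). -/
def pqInt (p q : ℝ) (f : ℝ → ℝ) : ℝ :=
  (p - q) * ∑' k : ℕ, (q ^ k / p ^ (k + 1)) * f (q ^ k / p ^ (k + 1))

/-- The (p,q)-Beta function B_{p,q}(m,n) = ∫₀¹ x^{m-1} (1 ⊖ qx)^{n-1} d_{p,q}x. -/
def pqBeta (p q : ℝ) (m n : ℕ) : ℝ :=
  pqInt p q (fun x => x ^ (m - 1) * pqPow p q 1 (q * x) (n - 1))

/-- The (p,q)-Gamma function: Γ_{p,q}(n+1) = [n]_{p,q}!. -/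
def pqGamma (p q : ℝ) (n : ℕ) : ℝ := pqFactorial p q (n - 1)

/-- The (p,q)-Bernstein basis b_{n,k}^{p,q}(1,x). -/
def bBasis (p q : ℝ) (n k : ℕ) (x : ℝ) : ℝ :=
  pqBinom p q n k * p ^ (k * (k - 1) / 2) / p ^ (n * (n - 1) / 2) * x ^ k *
    pqPow p q 1 x (n - k)

/-- The kernel b_{n,k}^{p,q}(t) = [n choose k] t^k (1 ⊖ qt)^{n-k}. -/
def bKernel (p q : ℝ) (n k : ℕ) (t : ℝ) : ℝ :=
  pqBinom p q n k * t ^ k * pqPow p q 1 (q * t) (n - k)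

/-- The (p,q)-Bernstein operator B_{n,p,q}(f,x). -/
def pqBernstein (p q : ℝ) (n : ℕ) (f : ℝ → ℝ) (x : ℝ) : ℝ :=
  ∑ k ∈ Finset.range (n + 1),
    bBasis p q n k x * f (p ^ (n - k) * pqNum p q k / pqNum p q n)

/-- The (p,q)-Bernstein-Durrmeyer operator D_n^{p,q}(f,x). -/
def pqDurrmeyer (p q : ℝ) (n : ℕ) (f : ℝ → ℝ) (x : ℝ) : ℝ :=
  pqNum p q (n + 1) *
    ∑ k ∈ Finset.Icc 1 n, (p ^ ((n - k + 1) * (n + k) / 2))⁻¹ * bBasis p q n k x *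
      pqInt p q (fun t => bKernel p q n (k - 1) t * f t)
  + bBasis p q n 0 x * f 0

/-!
The nodes `q^k / p^(k+1)` of the (p,q)-integral form a geometric progression, so
`∫₀¹ x^a d_{p,q}x = 1 / [a+1]_{p,q}`, which is `B(a+1, 1)`. Splitting off the last factor of
`(1 ⊖ qx)^{b+1}` gives `B(a+1, b+2) = p^b B(a+1, b+1) - q^(b+1) B(a+2, b+1)`, and the closed form
follows by induction on `b`; the inductive step reduces to
`[a+b+2]_{p,q} - q^(b+1) [a+1]_{p,q} = p^(a+1) [b+1]_{p,q}`. The exponent `(n-1)(2m+n-2)/2` is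
`(m-1)(n-1) + (n choose 2)`.
-/

open Finset Set

lemma pqNum_add {p q : ℝ} (hpq : p ≠ q) (m n : ℕ) :
    pqNum p q (m + n) = p ^ m * pqNum p q n + q ^ n * pqNum p q m := by
  have hsub : p - q ≠ 0 := sub_ne_zero.2 hpq
  unfold pqNum
  field_simp
  ring

lemma pqNum_pos {p q : ℝ} (hq : 0 ≤ q) (hqp : q < p) {n : ℕ} (hn : n ≠ 0) :
    0 < pqNum p q n :=
  div_pos (sub_pos.2 (pow_lt_pow_left₀ hqp hq hn)) (sub_pos.2 hqp)

lemma pqFactorial_succ (p q : ℝ) (n : ℕ) :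
    pqFactorial p q (n + 1) = pqFactorial p q n * pqNum p q (n + 1) :=
  prod_range_succ _ n

lemma pqFactorial_pos {p q : ℝ} (hq : 0 ≤ q) (hqp : q < p) (n : ℕ) :
    0 < pqFactorial p q n :=
  prod_pos fun k _ => pqNum_pos hq hqp k.succ_ne_zero

lemma pqPow_succ (p q a b : ℝ) (n : ℕ) :
    pqPow p q a b (n + 1) = pqPow p q a b n * (p ^ n * a - q ^ n * b) :=
  prod_range_succ _ n

@[fun_prop]
lemma continuous_pqPow (p q a : ℝ) (n : ℕ) : Continuous fun b => pqPow p q a b n := by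
  unfold pqPow
  fun_prop

lemma summable_pqInt {p q : ℝ} (hq : 0 ≤ q) (hqp : q < p) {f : ℝ → ℝ}
    (hf : ContinuousOn f (Icc 0 p⁻¹)) :
    Summable fun k : ℕ => q ^ k / p ^ (k + 1) * f (q ^ k / p ^ (k + 1)) := by
  have hp : 0 < p := hq.trans_lt hqp
  have hr : q / p < 1 := (div_lt_one hp).2 hqp
  obtain ⟨C, hC⟩ := isCompact_Icc.exists_bound_of_continuousOn hf
  refine Summable.of_norm_bounded
    ((summable_geometric_of_lt_one (by positivity) hr).mul_left (p⁻¹ * C)) fun k => ?_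
  have hnode : q ^ k / p ^ (k + 1) = p⁻¹ * (q / p) ^ k := by
    rw [div_pow, pow_succ]; field_simp
  have hmem : q ^ k / p ^ (k + 1) ∈ Icc 0 p⁻¹ := by
    rw [hnode]
    exact ⟨by positivity, mul_le_of_le_one_right (by positivity)
      (pow_le_one₀ (by positivity) hr.le)⟩
  rw [norm_mul, Real.norm_of_nonneg hmem.1, hnode]
  calc p⁻¹ * (q / p) ^ k * ‖f (p⁻¹ * (q / p) ^ k)‖ ≤ p⁻¹ * (q / p) ^ k * C := by
        gcongr; exact hC _ (hnode ▸ hmem)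
    _ = p⁻¹ * C * (q / p) ^ k := by ring

lemma pqInt_const_mul (p q c : ℝ) (f : ℝ → ℝ) :
    pqInt p q (fun x => c * f x) = c * pqInt p q f := by
  simp only [pqInt, mul_left_comm _ c, tsum_mul_left]

lemma pqInt_sub {p q : ℝ} (hq : 0 ≤ q) (hqp : q < p) {f g : ℝ → ℝ}
    (hf : ContinuousOn f (Icc 0 p⁻¹)) (hg : ContinuousOn g (Icc 0 p⁻¹)) :
    pqInt p q (fun x => f x - g x) = pqInt p q f - pqInt p q g := by
  simp only [pqInt, mul_sub, (summable_pqInt hq hqp hf).tsum_sub (summable_pqInt hq hqp hg)]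

lemma pqInt_pow {p q : ℝ} (hq : 0 ≤ q) (hqp : q < p) (a : ℕ) :
    pqInt p q (fun x => x ^ a) = 1 / pqNum p q (a + 1) := by
  have hp : 0 < p := hq.trans_lt hqp
  have hr : (q / p) ^ (a + 1) < 1 :=
    pow_lt_one₀ (by positivity) ((div_lt_one hp).2 hqp) a.succ_ne_zero
  have hterm : ∀ k : ℕ, q ^ k / p ^ (k + 1) * (q ^ k / p ^ (k + 1)) ^ a
      = (p ^ (a + 1))⁻¹ * ((q / p) ^ (a + 1)) ^ k := fun k => by
    rw [show q ^ k / p ^ (k + 1) = (q / p) ^ k / p by rw [div_pow, pow_succ, div_div]]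
    ring
  have hpow : q ^ (a + 1) < p ^ (a + 1) := pow_lt_pow_left₀ hqp hq a.succ_ne_zero
  rw [pqInt, tsum_congr hterm, tsum_mul_left, tsum_geometric_of_lt_one (by positivity) hr, pqNum]
  field_simp
  rw [div_pow]
  field_simp

lemma pqBeta_add_one_add_one (p q : ℝ) (a b : ℕ) :
    pqBeta p q (a + 1) (b + 1) = pqInt p q (fun x => x ^ a * pqPow p q 1 (q * x) b) :=
  rfl

lemma pqBeta_add_one_one {p q : ℝ} (hq : 0 ≤ q) (hqp : q < p) (a : ℕ) :
    pqBeta p q (a + 1) 1 = 1 / pqNum p q (a + 1) := by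
  simpa [pqBeta_add_one_add_one, pqPow] using pqInt_pow hq hqp a

lemma pqBeta_recurrence {p q : ℝ} (hq : 0 ≤ q) (hqp : q < p) (a b : ℕ) :
    pqBeta p q (a + 1) (b + 1 + 1) =
      p ^ b * pqBeta p q (a + 1) (b + 1) - q ^ (b + 1) * pqBeta p q (a + 1 + 1) (b + 1) := by
  simp only [pqBeta_add_one_add_one, ← pqInt_const_mul]
  rw [← pqInt_sub hq hqp (Continuous.continuousOn (by fun_prop))
    (Continuous.continuousOn (by fun_prop))]
  congr 1
  funext x
  rw [pqPow_succ]
  ring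

lemma pqBeta_mul_pqFactorial {p q : ℝ} (hq : 0 ≤ q) (hqp : q < p) (a b : ℕ) :
    pqBeta p q (a + 1) (b + 1) * pqFactorial p q (a + b + 1) =
      p ^ (a * b + (b + 1).choose 2) * pqFactorial p q a * pqFactorial p q b := by
  induction b generalizing a with
  | zero =>
    have hne := (pqNum_pos hq hqp a.succ_ne_zero).ne'
    have hfac₀ : pqFactorial p q 0 = 1 := prod_range_zero _
    rw [pqBeta_add_one_one hq hqp, Nat.add_zero, pqFactorial_succ, hfac₀]
    simp only [Nat.mul_zero, Nat.choose_succ_self, Nat.add_zero, pow_zero, mul_one]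
    field_simp
  | succ b ih =>
    have hnum : pqNum p q (a + b + 1 + 1) - q ^ (b + 1) * pqNum p q (a + 1) =
        p ^ (a + 1) * pqNum p q (b + 1) := by
      rw [show a + b + 1 + 1 = (a + 1) + (b + 1) by ring, pqNum_add hqp.ne']
      ring
    have ih₂ := ih (a + 1)
    rw [show a + 1 + b + 1 = a + b + 1 + 1 by ring, pqFactorial_succ p q (a + b + 1),
      pqFactorial_succ p q a, show (a + 1) * b = a * b + b by ring, add_right_comm,
      pow_add] at ih₂
    rw [pqBeta_recurrence hq hqp, show a + (b + 1) + 1 = a + b + 1 + 1 by ring,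
      pqFactorial_succ p q (a + b + 1), pqFactorial_succ p q b, Nat.choose_succ_succ' (b + 1),
      Nat.choose_one_right, show a * (b + 1) + (b + 1 + (b + 1).choose 2) =
        a * b + (b + 1).choose 2 + b + (a + 1) by ring, pow_add, pow_add]
    linear_combination (p ^ b * pqNum p q (a + b + 1 + 1)) * ih a - q ^ (b + 1) * ih₂ +
      (p ^ (a * b + (b + 1).choose 2) * p ^ b * pqFactorial p q a * pqFactorial p q b) * hnum

lemma half_mul_two_mul_add_eq_mul_add_choose (a b : ℕ) :
    b * (2 * (a + 1) + (b + 1) - 2) / 2 = a * b + (b + 1).choose 2 := by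
  have hprod : b * (2 * (a + 1) + (b + 1) - 2) = (b + 1) * b + 2 * (a * b) := by
    rw [show 2 * (a + 1) + (b + 1) - 2 = 2 * a + b + 1 by omega]
    ring
  rw [Nat.choose_two_right, hprod, Nat.add_mul_div_left _ _ two_pos, Nat.add_sub_cancel, add_comm]

theorem pqBeta_eq_gamma_general (p q : ℝ) (hq : 0 < q) (hqp : q < p)
    (m n : ℕ) (hm : 1 ≤ m) (hn : 1 ≤ n) :
    pqBeta p q m n =
      p ^ ((n - 1) * (2 * m + n - 2) / 2) *
        (pqGamma p q m * pqGamma p q n / pqGamma p q (m + n)) := by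
  obtain ⟨a, rfl⟩ := Nat.exists_eq_add_of_le' hm
  obtain ⟨b, rfl⟩ := Nat.exists_eq_add_of_le' hn
  have hfac := pqBeta_mul_pqFactorial hq.le hqp a b
  simp only [pqGamma, Nat.add_sub_cancel, show a + 1 + (b + 1) - 1 = a + b + 1 by omega,
    half_mul_two_mul_add_eq_mul_add_choose]
  rw [← mul_div_assoc, eq_div_iff (pqFactorial_pos hq.le hqp _).ne', hfac, mul_assoc]

theorem pqBeta_eq_gamma (p q : ℝ) (hq : 0 < q) (hqp : q < p) (hp : p ≤ 1)
    (m n : ℕ) (hm : 1 ≤ m) (hn : 1 ≤ n) :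
    pqBeta p q m n =
      p ^ ((n - 1) * (2 * m + n - 2) / 2) *
        (pqGamma p q m * pqGamma p q n / pqGamma p q (m + n)) :=
  pqBeta_eq_gamma_general p q hq hqp m n hm hn
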